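/- arXiv:2508.11572 — 3 statements merged into one kernel-verified Lean document; each statement's English description precedes it below -/
import Mathlib

section
/- A finite connected graph is non-bipartite if and only if its signless Laplacian matrix L_+ = D + A (where D is the degree matrix and A the adjacency matrix) is positive definite. -/
/-!
The quadratic form of `L₊ = D + A` is `xᵀ L₊ x = ∑_{ij ∈ E} (x i + x j)²`, so `L₊` is positive
semidefinite and `xᵀ L₊ x = 0` exactly when `x i = -x j` along every edge. On a connected graph
such an `x` has constant absolute value, so a nonzero one is the `±1`-signing of a bipartition,
and conversely every bipartition yields one.
-/

/-- A graph is bipartite if its vertex set can be partitioned into two sets such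
that every edge has one endpoint in each set. -/
def SimpleGraph.IsBipartite' {V : Type*} (G : SimpleGraph V) : Prop :=
  ∃ s : Set V, ∀ ⦃a b : V⦄, G.Adj a b → (a ∈ s ↔ b ∉ s)

open Finset Matrix

namespace SimpleGraph

section Signing

variable {V R : Type*} {G : SimpleGraph V}

theorem Reachable.abs_eq_of_forall_adj_eq_neg [AddCommGroup R] [LinearOrder R]
    [IsOrderedAddMonoid R] {x : V → R} (hx : ∀ i j, G.Adj i j → x i = -x j) {i j : V}
    (hij : G.Reachable i j) : |x i| = |x j| := by
  obtain ⟨w⟩ := hij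
  induction w with
  | nil => rfl
  | cons hadj _ ih => rw [hx _ _ hadj, abs_neg, ih]

theorem isBipartite'_of_forall_adj_eq_neg [AddCommGroup R] [LinearOrder R]
    [IsOrderedAddMonoid R] {x : V → R} (hx₀ : ∀ i, x i ≠ 0)
    (hx : ∀ i j, G.Adj i j → x i = -x j) : G.IsBipartite' := by
  refine ⟨{u | 0 < x u}, fun a b hab => ?_⟩
  rw [Set.mem_ofPred_eq, Set.mem_ofPred_eq, hx a b hab, neg_pos, not_lt]
  exact ⟨le_of_lt, fun h => h.lt_of_ne (hx₀ b)⟩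

theorem Connected.isBipartite'_of_forall_adj_eq_neg [AddCommGroup R] [LinearOrder R]
    [IsOrderedAddMonoid R] (hG : G.Connected) {x : V → R} (hx₀ : x ≠ 0)
    (hx : ∀ i j, G.Adj i j → x i = -x j) : G.IsBipartite' := by
  obtain ⟨v, hv⟩ := Function.ne_iff.mp hx₀
  refine SimpleGraph.isBipartite'_of_forall_adj_eq_neg (fun u hu => hv ?_) hx
  rw [Pi.zero_apply, ← abs_eq_zero, (hG v u).abs_eq_of_forall_adj_eq_neg hx, hu, abs_zero]

theorem IsBipartite'.exists_ne_zero_forall_adj_eq_neg [Ring R] [Nontrivial R] [Nonempty V]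
    (hG : G.IsBipartite') : ∃ x : V → R, x ≠ 0 ∧ ∀ i j, G.Adj i j → x i = -x j := by
  classical
  obtain ⟨s, hs⟩ := hG
  refine ⟨fun v => if v ∈ s then 1 else -1, Function.ne_iff.mpr ?_, fun i j hij => ?_⟩
  · obtain ⟨v⟩ := ‹Nonempty V›
    exact ⟨v, by split_ifs <;> simp⟩
  · by_cases hi : i ∈ s
    · simp [hi, (hs hij).mp hi]
    · simp [hi, not_not.mp (mt (hs hij).mpr hi)]

theorem Connected.isBipartite'_iff_exists_ne_zero_forall_adj_eq_neg [Ring R] [LinearOrder R]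
    [IsStrictOrderedRing R] (hG : G.Connected) :
    G.IsBipartite' ↔ ∃ x : V → R, x ≠ 0 ∧ ∀ i j, G.Adj i j → x i = -x j :=
  have := hG.nonempty
  ⟨IsBipartite'.exists_ne_zero_forall_adj_eq_neg,
    fun ⟨_, hx₀, hx⟩ => hG.isBipartite'_of_forall_adj_eq_neg hx₀ hx⟩

end Signing

section SignlessLaplacian

variable {V : Type*} [Fintype V] [DecidableEq V] (G : SimpleGraph V) [DecidableRel G.Adj]
  (R : Type*)

def signlessLapMatrix [AddMonoidWithOne R] : Matrix V V R := G.degMatrix R + G.adjMatrix R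

theorem isHermitian_signlessLapMatrix [NonAssocSemiring R] [StarRing R] :
    (G.signlessLapMatrix R).IsHermitian :=
  (isHermitian_degMatrix R G).add (isHermitian_adjMatrix R G)

theorem dotProduct_mulVec_signlessLapMatrix [Field R] [CharZero R] (x : V → R) :
    x ⬝ᵥ (G.signlessLapMatrix R *ᵥ x) =
      (∑ i : V, ∑ j : V, if G.Adj i j then (x i + x j) ^ 2 else 0) / 2 := by
  simp_rw [signlessLapMatrix, add_mulVec, dotProduct_add, dotProduct_mulVec_degMatrix,
    dotProduct_mulVec_adjMatrix, ← sum_add_distrib, degree_eq_sum_if_adj, sum_mul, ite_mul,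
    one_mul, zero_mul, ← sum_add_distrib, ite_add_ite, add_zero]
  -- Split the double sum into two halves and swap `i` and `j` in one of them.
  rw [← add_self_div_two (∑ i : V, ∑ j : V, _)]
  conv_lhs => enter [1, 2, 2, i, 2, j]; rw [if_congr (adj_comm G i j) rfl rfl]
  conv_lhs => enter [1, 2]; rw [Finset.sum_comm]
  simp_rw [← sum_add_distrib, ite_add_ite]
  congr 2 with i
  congr 2 with j
  ring_nf

variable [Field R] [LinearOrder R] [IsStrictOrderedRing R]

theorem dotProduct_mulVec_signlessLapMatrix_nonneg (x : V → R) :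
    0 ≤ x ⬝ᵥ (G.signlessLapMatrix R *ᵥ x) := by
  rw [dotProduct_mulVec_signlessLapMatrix]
  positivity

theorem dotProduct_mulVec_signlessLapMatrix_eq_zero_iff (x : V → R) :
    x ⬝ᵥ (G.signlessLapMatrix R *ᵥ x) = 0 ↔ ∀ i j, G.Adj i j → x i = -x j := by
  simp (disch := intros; positivity)
    [dotProduct_mulVec_signlessLapMatrix, sum_eq_zero_iff_of_nonneg, add_eq_zero_iff_eq_neg]

theorem posDef_signlessLapMatrix_iff [StarRing R] [TrivialStar R] :
    (G.signlessLapMatrix R).PosDef ↔ ¬ ∃ x : V → R, x ≠ 0 ∧ ∀ i j, G.Adj i j → x i = -x j := by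
  simp_rw [posDef_iff_dotProduct_mulVec, star_trivial, not_exists, not_and,
    ← dotProduct_mulVec_signlessLapMatrix_eq_zero_iff,
    (dotProduct_mulVec_signlessLapMatrix_nonneg G R _).lt_iff_ne', ne_eq,
    and_iff_right (isHermitian_signlessLapMatrix G R)]

end SignlessLaplacian

end SimpleGraph

/-- A finite connected graph is non-bipartite iff its signless Laplacian
`L₊ = D + A` is positive definite. -/
theorem nonbipartite_iff_signless_laplacian_posDef
    {V : Type*} [Fintype V] [DecidableEq V]
    (G : SimpleGraph V) [DecidableRel G.Adj] (hconn : G.Connected) :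
    ¬ G.IsBipartite' ↔ (G.degMatrix ℝ + G.adjMatrix ℝ).PosDef := by
  rw [show G.degMatrix ℝ + G.adjMatrix ℝ = G.signlessLapMatrix ℝ from rfl,
    G.posDef_signlessLapMatrix_iff ℝ, hconn.isBipartite'_iff_exists_ne_zero_forall_adj_eq_neg (R := ℝ)]
end

section
/- Suppose (G^k) is a sequence of symmetric positive semidefinite operators and (Q^k) a sequence of vectors such that for all k, ⟨Q^{k+1} − Q*, G^k(Q^k − Q^{k+1})⟩ ≥ 0 and ‖Q^{k+1} − Q*‖²_{G^{k+1}} ≤ ‖Q^{k+1} − Q*‖²_{G^k}. Then Σ_{k=0}^∞ ‖Q^k − Q^{k+1}‖²_{G^k} ≤ ‖Q^0 − Q*‖²_{G^0}; in particular ‖Q^k − Q^{k+1}‖²_{G^k} → 0. -/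
open RealInnerProductSpace Filter

/-!
Writing `x = Q^{k+1} - Q*` and `y = Q^k - Q^{k+1}`, symmetry of `G^k` gives
`‖x + y‖²_{G^k} = ‖x‖²_{G^k} + 2⟨x, G^k y⟩ + ‖y‖²_{G^k}`. The first hypothesis drops the cross
term and the second replaces `G^k` by `G^{k+1}` in `‖x‖²`, so `‖Q^k - Q^{k+1}‖²_{G^k}` is at most
the decrease `a_k - a_{k+1}` of `a_k = ‖Q^k - Q*‖²_{G^k} ≥ 0`; the partial sums telescope.
-/

section Telescoping

variable {α : Type*} [AddCommGroup α] [PartialOrder α] [IsOrderedAddMonoid α]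

theorem Finset.sum_range_le_of_le_sub_succ {f a : ℕ → α} (hf : ∀ k, f k ≤ a k - a (k + 1))
    (ha : ∀ k, 0 ≤ a k) (m : ℕ) : ∑ k ∈ Finset.range m, f k ≤ a 0 :=
  calc ∑ k ∈ Finset.range m, f k ≤ ∑ k ∈ Finset.range m, (a k - a (k + 1)) :=
        Finset.sum_le_sum fun k _ => hf k
    _ = a 0 - a m := Finset.sum_range_sub' a m
    _ ≤ a 0 := sub_le_self _ (ha m)

end Telescoping

theorem tendsto_zero_of_le_sub_succ {f a : ℕ → ℝ} (hf₀ : ∀ k, 0 ≤ f k)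
    (hf : ∀ k, f k ≤ a k - a (k + 1)) (ha : ∀ k, 0 ≤ a k) : Tendsto f atTop (nhds 0) :=
  (summable_of_sum_range_le hf₀ (Finset.sum_range_le_of_le_sub_succ hf ha)).tendsto_atTop_zero

theorem LinearMap.IsSymmetric.inner_map_add_add {V : Type*} [NormedAddCommGroup V]
    [InnerProductSpace ℝ V] {T : V →ₗ[ℝ] V} (hT : T.IsSymmetric) (x y : V) :
    ⟪x + y, T (x + y)⟫ = ⟪x, T x⟫ + 2 * ⟪x, T y⟫ + ⟪y, T y⟫ := by
  have hcross : ⟪y, T x⟫ = ⟪x, T y⟫ := by rw [← hT, real_inner_comm]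
  simp only [map_add, inner_add_left, inner_add_right, hcross]
  ring

theorem telescoping_sum_bounded_and_tendsto_zero_general
    {V : Type*} [NormedAddCommGroup V] [InnerProductSpace ℝ V]
    (G : ℕ → (V →ₗ[ℝ] V)) (hsym : ∀ k, (G k).IsSymmetric)
    (hpsd : ∀ k (v : V), 0 ≤ ⟪v, G k v⟫)
    (Q : ℕ → V) (Qs : V)
    (hpos : ∀ k, 0 ≤ ⟪Q (k + 1) - Qs, (G k) (Q k - Q (k + 1))⟫)
    (hmono : ∀ k, ⟪Q (k + 1) - Qs, (G (k + 1)) (Q (k + 1) - Qs)⟫ ≤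
      ⟪Q (k + 1) - Qs, (G k) (Q (k + 1) - Qs)⟫) :
    (∀ m : ℕ, ∑ k ∈ Finset.range m, ⟪Q k - Q (k + 1), (G k) (Q k - Q (k + 1))⟫ ≤
        ⟪Q 0 - Qs, (G 0) (Q 0 - Qs)⟫) ∧
    Tendsto (fun k => ⟪Q k - Q (k + 1), (G k) (Q k - Q (k + 1))⟫)
      atTop (nhds 0) := by
  have descent : ∀ k, ⟪Q k - Q (k + 1), (G k) (Q k - Q (k + 1))⟫ ≤
      ⟪Q k - Qs, (G k) (Q k - Qs)⟫ - ⟪Q (k + 1) - Qs, (G (k + 1)) (Q (k + 1) - Qs)⟫ := by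
    intro k
    have expand := (hsym k).inner_map_add_add (Q (k + 1) - Qs) (Q k - Q (k + 1))
    rw [sub_add_sub_cancel'] at expand
    linarith [hpos k, hmono k]
  have hdist : ∀ k, 0 ≤ ⟪Q k - Qs, (G k) (Q k - Qs)⟫ := fun k => hpsd k _
  exact ⟨Finset.sum_range_le_of_le_sub_succ descent hdist,
    tendsto_zero_of_le_sub_succ (fun k => hpsd k _) descent hdist⟩

/-- If `⟨Q^{k+1} − Q*, G^k(Q^k − Q^{k+1})⟩ ≥ 0` and the `G`-norms of `Q^{k+1} − Q*`
are monotone in `G`, then `Σ_k ‖Q^k − Q^{k+1}‖²_{G^k} ≤ ‖Q^0 − Q*‖²_{G^0}` and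
`‖Q^k − Q^{k+1}‖²_{G^k} → 0`. -/
theorem telescoping_sum_bounded_and_tendsto_zero
    {V : Type*} [NormedAddCommGroup V] [InnerProductSpace ℝ V]
    [FiniteDimensional ℝ V]
    (G : ℕ → (V →ₗ[ℝ] V)) (hsym : ∀ k, (G k).IsSymmetric)
    (hpsd : ∀ k (v : V), 0 ≤ ⟪v, G k v⟫)
    (Q : ℕ → V) (Qs : V)
    (hpos : ∀ k, 0 ≤ ⟪Q (k + 1) - Qs, (G k) (Q k - Q (k + 1))⟫)
    (hmono : ∀ k, ⟪Q (k + 1) - Qs, (G (k + 1)) (Q (k + 1) - Qs)⟫ ≤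
      ⟪Q (k + 1) - Qs, (G k) (Q (k + 1) - Qs)⟫) :
    (∀ m : ℕ, ∑ k ∈ Finset.range m, ⟪Q k - Q (k + 1), (G k) (Q k - Q (k + 1))⟫ ≤
        ⟪Q 0 - Qs, (G 0) (Q 0 - Qs)⟫) ∧
    Tendsto (fun k => ⟪Q k - Q (k + 1), (G k) (Q k - Q (k + 1))⟫)
      atTop (nhds 0) :=
  telescoping_sum_bounded_and_tendsto_zero_general G hsym hpsd Q Qs hpos hmono
end

section
/- Let L be the Laplacian of a connected graph with PSD square root N = L^{1/2}. If X̂, Ŷ, M̂ satisfy ∇f(X̂) + N Ŷ + L M̂ X̂ = 0 and N M̂ X̂ = 0, where M̂ is symmetric PSD with null(M̂) = span(1), then X̂ is consensual (X̂ = 1 x̂ᵀ for some x̂) and ∇f(X̂) + N Ŷ = 0, i.e., the pair (X̂, Ŷ) satisfies the first-order optimality conditions 0 = ∇f(X*) + N Y* and 0 = L X*. -/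
/-!
The columns of `M̂ X̂` lie in the range of the symmetric matrix `M̂`, hence are orthogonal to its
kernel `span 1`. Since `N M̂ X̂ = 0` gives `L M̂ X̂ = N (N M̂ X̂) = 0`, they also lie in
`null L = span 1`. A constant vector orthogonal to `1` vanishes, so `M̂ X̂ = 0`; then `X̂` has
constant columns, the term `L M̂ X̂` drops out of the first equation, and `L X̂ = 0`.
-/

namespace Matrix

variable {m n R : Type*} [Fintype m]

theorem mul_eq_zero_iff_of_mulVec_eq_zero_iff [CommRing R] {A : Matrix m m R}
    (hA : ∀ v : m → R, A *ᵥ v = 0 ↔ ∃ c : R, v = fun _ => c) (X : Matrix m n R) :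
    A * X = 0 ↔ ∃ x : n → R, X = fun _ j => x j := by
  constructor
  · intro h
    choose x hx using fun j => (hA fun i => X i j).1 (funext fun i => congrFun (congrFun h i) j)
    exact ⟨x, funext fun i => funext fun j => congrFun (hx j) i⟩
  · rintro ⟨x, rfl⟩
    exact funext fun i => funext fun j => congrFun ((hA _).2 ⟨x j, rfl⟩) i

theorem one_vecMul_mul_eq_zero [CommRing R] {M : Matrix m m R} (hM : M.IsSymm)
    (hM1 : M *ᵥ 1 = 0) (X : Matrix m n R) : 1 ᵥ* (M * X) = 0 := by
  rw [← vecMul_vecMul, ← hM.eq, vecMul_transpose, hM1, zero_vecMul]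

theorem const_cols_eq_zero_of_one_vecMul_eq_zero [Field R] [CharZero R] {x : n → R}
    (h : 1 ᵥ* (fun _ j => x j : Matrix m n R) = 0) : (fun _ j => x j : Matrix m n R) = 0 := by
  cases isEmpty_or_nonempty m
  · exact Subsingleton.elim _ _
  · ext i j
    simpa [vecMul, dotProduct] using congrFun h j

end Matrix

open Matrix in
theorem stationary_point_is_optimal_general
    {N n : ℕ} (L Nm Mh : Matrix (Fin N) (Fin N) ℝ)
    (hLnull : ∀ v : Fin N → ℝ, L.mulVec v = 0 ↔ ∃ c : ℝ, v = fun _ => c)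
    (hNN : Nm * Nm = L)
    (hMh : Mh.PosSemidef)
    (hMhnull : ∀ v : Fin N → ℝ, Mh.mulVec v = 0 ↔ ∃ c : ℝ, v = fun _ => c)
    (Xh Yh Gf : Matrix (Fin N) (Fin n) ℝ)
    (h1 : Gf + Nm * Yh + L * Mh * Xh = 0)
    (h2 : Nm * Mh * Xh = 0) :
    (∃ x : Fin n → ℝ, Xh = fun _ j => x j) ∧ Gf + Nm * Yh = 0 ∧ L * Xh = 0 := by
  have hMX : Mh * Xh = 0 := by
    have hLMX : L * (Mh * Xh) = 0 := by
      rw [← hNN, Matrix.mul_assoc, ← Matrix.mul_assoc Nm Mh, h2, Matrix.mul_zero]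
    obtain ⟨y, hy⟩ := (mul_eq_zero_iff_of_mulVec_eq_zero_iff hLnull _).1 hLMX
    have hMsymm : Mh.IsSymm :=
      (conjTranspose_eq_transpose_of_trivial Mh).symm.trans hMh.isHermitian
    have hsum := one_vecMul_mul_eq_zero hMsymm ((hMhnull 1).2 ⟨1, rfl⟩) Xh
    rw [hy] at hsum ⊢
    exact const_cols_eq_zero_of_one_vecMul_eq_zero hsum
  obtain ⟨x, hx⟩ := (mul_eq_zero_iff_of_mulVec_eq_zero_iff hMhnull Xh).1 hMX
  refine ⟨⟨x, hx⟩, ?_, (mul_eq_zero_iff_of_mulVec_eq_zero_iff hLnull Xh).2 ⟨x, hx⟩⟩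
  rwa [Matrix.mul_assoc, hMX, Matrix.mul_zero, add_zero] at h1

/-- If `∇f(X̂) + N Ŷ + L M̂ X̂ = 0` and `N M̂ X̂ = 0`, where `L` is the Laplacian of
a connected graph with PSD square root `N = L^{1/2}` and `M̂` is symmetric PSD
with `null(M̂) = span(1)`, then `X̂` is consensual and `(X̂, Ŷ)` satisfies the
first-order optimality conditions `0 = ∇f(X̂) + N Ŷ` and `0 = L X̂`. -/
theorem stationary_point_is_optimal
    {N n : ℕ} (L Nm Mh : Matrix (Fin N) (Fin N) ℝ)
    (hL : L.PosSemidef)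
    (hLnull : ∀ v : Fin N → ℝ, L.mulVec v = 0 ↔ ∃ c : ℝ, v = fun _ => c)
    (hNm : Nm.PosSemidef) (hNN : Nm * Nm = L)
    (hMh : Mh.PosSemidef)
    (hMhnull : ∀ v : Fin N → ℝ, Mh.mulVec v = 0 ↔ ∃ c : ℝ, v = fun _ => c)
    (Xh Yh Gf : Matrix (Fin N) (Fin n) ℝ)
    (h1 : Gf + Nm * Yh + L * Mh * Xh = 0)
    (h2 : Nm * Mh * Xh = 0) :
    (∃ x : Fin n → ℝ, Xh = fun _ j => x j) ∧ Gf + Nm * Yh = 0 ∧ L * Xh = 0 :=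
  stationary_point_is_optimal_general L Nm Mh hLnull hNN hMh hMhnull Xh Yh Gf h1 h2
end
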